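/- arXiv:2210.03227 — 2 statements merged into one kernel-verified Lean document; each statement's English description precedes it below -/
import Mathlib

section
/- Let R be a commutative ring, W ∈ R, and (E₀, E₁, φ₀, φ₁) a matrix factorization of W such that multiplication by W is injective on both E₀ and E₁. Set M = coker(φ₁ : E₁ → E₀), an R/(W)-module. Then the 2-periodic complex of R/(W)-modules ⋯ → E₀/W·E₀ → E₁/W·E₁ → E₀/W·E₀ → M → 0, whose maps alternate between the reduction of φ₁ (from the E₁-terms to the E₀-terms) and the reduction of φ₀ (from the E₀-terms to the E₁-terms), and whose final map is the projection E₀/W·E₀ → M, is exact. In particular, when E₀ and E₁ are finite free R-modules, M admits an infinite 2-periodic resolution by finite free R/(W)-modules. -/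
/-!
If `φ₁ y ∈ W·E₀`, say `φ₁ y = W • x`, then `W • φ₀ x = φ₀ (φ₁ y) = W • y`, so `y = φ₀ x` since
`W` is a non-zero-divisor on `E₁`; with the roles of `φ₀` and `φ₁` swapped this gives exactness
at every inner spot. At the last spot `W·E₀ = φ₁ (φ₀ E₀) ⊆ φ₁ E₁`, so the kernel of the projection
to `M` is the image of `φ₁`. Freeness of `E/W·E` over `R/(W)` is base change of `E` along `R → R/(W)`.
-/

open Pointwise Submodule

namespace QuotSMulTop

variable {R : Type*} [CommRing R] (W : R) {M N : Type*} [AddCommGroup M] [Module R M]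
  [AddCommGroup N] [Module R N]

theorem exact_map_of_comp_eq_smul {f : M →ₗ[R] N} {g : N →ₗ[R] M}
    (hgf : ∀ x, g (f x) = W • x) (hfg : ∀ y, f (g y) = W • y) (hW : IsSMulRegular N W) :
    Function.Exact (map W f) (map W g) := by
  intro z
  induction z using Submodule.Quotient.induction_on with | H y => ?_
  simp only [map_apply_mk, Submodule.Quotient.mk_eq_zero,
    mem_smul_pointwise_iff_exists, mem_top, true_and]
  constructor
  · rintro ⟨x, hx⟩
    have hfx : f x = y := hW <| show W • f x = W • y by rw [← map_smul, hx, hfg]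
    exact ⟨Submodule.Quotient.mk x, by rw [map_apply_mk, hfx]⟩
  · rintro ⟨x, hx⟩
    induction x using Submodule.Quotient.induction_on with | H x => ?_
    rw [map_apply_mk, Submodule.Quotient.eq, mem_smul_pointwise_iff_exists] at hx
    obtain ⟨u, -, hu⟩ := hx
    exact ⟨x - g u, by rw [smul_sub, ← map_smul, hu, map_sub, hgf, sub_sub_cancel]⟩

theorem exact_map_factor (g : N →ₗ[R] M) (h : W • (⊤ : Submodule R M) ≤ LinearMap.range g) :
    Function.Exact (map W g) (factor h) := by
  intro z
  induction z using Submodule.Quotient.induction_on with | H x => ?_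
  simp only [factor, mapQ_apply, LinearMap.id_apply, Submodule.Quotient.mk_eq_zero, Set.mem_range]
  constructor
  · rintro ⟨y, rfl⟩
    exact ⟨Submodule.Quotient.mk y, rfl⟩
  · rintro ⟨y, hy⟩
    induction y using Submodule.Quotient.induction_on with | H y => ?_
    rw [map_apply_mk, Submodule.Quotient.eq] at hy
    simpa using sub_mem (LinearMap.mem_range_self g y) (h hy)

end QuotSMulTop

/--
Let `R` be a commutative ring, `W ∈ R`, and `(E₀, E₁, φ₀, φ₁)` a matrix
factorization of `W` such that multiplication by `W` is injective on both `E₀` and `E₁`.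
Set `M = coker (φ₁ : E₁ → E₀)`, an `R/(W)`-module.  Then the 2-periodic complex
`⋯ → E₀/W·E₀ → E₁/W·E₁ → E₀/W·E₀ → M → 0`, whose maps alternate between the reduction of
`φ₁` and the reduction of `φ₀`, and whose final map is the projection `E₀/W·E₀ → M`, is
exact.  (By 2-periodicity, exactness everywhere amounts to: the projection is surjective,
the complex is exact at the final `E₀/W`-spot, exact at every `E₁/W`-spot, and exact at
every deeper `E₀/W`-spot.)  In particular, when `E₀` and `E₁` are finite free `R`-modules,
the terms `E₀/W·E₀` and `E₁/W·E₁` of this resolution of `M` are finite free `R/(W)`-modules.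
-/
theorem stmt_1 {R : Type*} [CommRing R] (W : R)
    {E₀ E₁ : Type*} [AddCommGroup E₀] [Module R E₀] [AddCommGroup E₁] [Module R E₁]
    (φ₀ : E₀ →ₗ[R] E₁) (φ₁ : E₁ →ₗ[R] E₀)
    (h01 : ∀ x : E₀, φ₁ (φ₀ x) = W • x)
    (h10 : ∀ x : E₁, φ₀ (φ₁ x) = W • x)
    (hW0 : ∀ x : E₀, W • x = 0 → x = 0)
    (hW1 : ∀ x : E₁, W • x = 0 → x = 0) :
    -- `W·E₀` and `W·E₁`, as submodules
    let WE₀ : Submodule R E₀ := W • (⊤ : Submodule R E₀)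
    let WE₁ : Submodule R E₁ := W • (⊤ : Submodule R E₁)
    -- the reduction `E₀/W·E₀ → E₁/W·E₁` of `φ₀`
    let φ₀bar : (E₀ ⧸ WE₀) →ₗ[R] (E₁ ⧸ WE₁) :=
      Submodule.mapQ WE₀ WE₁ φ₀ (by
        intro x hx
        rw [← SetLike.mem_coe, Submodule.coe_pointwise_smul] at hx
        obtain ⟨y, -, rfl⟩ := hx
        refine Submodule.mem_comap.mpr ?_
        rw [map_smul]
        exact Submodule.smul_mem_pointwise_smul _ _ _ Submodule.mem_top)
    -- the reduction `E₁/W·E₁ → E₀/W·E₀` of `φ₁`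
    let φ₁bar : (E₁ ⧸ WE₁) →ₗ[R] (E₀ ⧸ WE₀) :=
      Submodule.mapQ WE₁ WE₀ φ₁ (by
        intro x hx
        rw [← SetLike.mem_coe, Submodule.coe_pointwise_smul] at hx
        obtain ⟨y, -, rfl⟩ := hx
        refine Submodule.mem_comap.mpr ?_
        rw [map_smul]
        exact Submodule.smul_mem_pointwise_smul _ _ _ Submodule.mem_top)
    -- the projection `E₀/W·E₀ → M = coker φ₁`
    let π : (E₀ ⧸ WE₀) →ₗ[R] (E₀ ⧸ LinearMap.range φ₁) :=
      Submodule.mapQ WE₀ (LinearMap.range φ₁) LinearMap.id (by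
        intro x hx
        rw [← SetLike.mem_coe, Submodule.coe_pointwise_smul] at hx
        obtain ⟨y, -, rfl⟩ := hx
        exact Submodule.mem_comap.mpr
          (LinearMap.mem_range.mpr ⟨φ₀ y, by simpa using h01 y⟩))
    -- exactness of the 2-periodic complex `⋯ → E₀/W → E₁/W → E₀/W → M → 0`
    (Function.Surjective π ∧
      Function.Exact φ₁bar π ∧
      Function.Exact φ₀bar φ₁bar ∧
      Function.Exact φ₁bar φ₀bar) ∧
    -- in particular: if `E₀, E₁` are finite free over `R`, the terms of the resolution
    -- are finite free modules over `R/(W)`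
    (Module.Finite R E₀ → Module.Free R E₀ → Module.Finite R E₁ → Module.Free R E₁ →
      (Module.Finite (R ⧸ Ideal.span {W}) (E₀ ⧸ WE₀) ∧
       Module.Free (R ⧸ Ideal.span {W}) (E₀ ⧸ WE₀) ∧
       Module.Finite (R ⧸ Ideal.span {W}) (E₁ ⧸ WE₁) ∧
       Module.Free (R ⧸ Ideal.span {W}) (E₁ ⧸ WE₁))) := by
  intro WE₀ WE₁ φ₀bar φ₁bar π
  have hWE₀ : WE₀ ≤ LinearMap.range φ₁ := by
    rintro _ ⟨x, -, rfl⟩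
    exact ⟨φ₀ x, h01 x⟩
  refine ⟨⟨factor_surjective _, QuotSMulTop.exact_map_factor W φ₁ hWE₀,
    QuotSMulTop.exact_map_of_comp_eq_smul W h01 h10 (.of_right_eq_zero_of_smul hW1),
    QuotSMulTop.exact_map_of_comp_eq_smul W h10 h01 (.of_right_eq_zero_of_smul hW0)⟩,
    fun _ _ _ _ => ⟨.of_restrictScalars_finite R _ _, inferInstance,
      .of_restrictScalars_finite R _ _, inferInstance⟩⟩
end

section
/- Let R be a commutative ring, s ∈ R, and A = R[y]/(s·y). Let M be an R-module on which multiplication by s is injective, and let i_*M denote M regarded as an A-module via the R-algebra map A → R sending y to 0 (so y acts by 0 on M). Then the sequence of A-modules 0 → i_*M → A ⊗_R M → (A/sA) ⊗_R M → 0 is exact, where the first map sends m to s ⊗ m (this map is A-linear) and the second map is the canonical projection. Moreover A/sA is isomorphic as an R-algebra to (R/sR)[y]. -/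
/-!
In `A = R[y]/(s·y)` every `a` satisfies `a·s = ε(a)·s`, so multiplication by `s` on `A` factors
as `A --ε--> R --s--> A` with `ε` surjective. Tensoring the exact sequence `A --s--> A → A/sA → 0`
with `M` therefore shows that the kernel of `A ⊗ M → A/sA ⊗ M` is the image of `m ↦ s ⊗ m`, and
`ε ⊗ M` sends `s ⊗ m` back to `s • m`, which gives injectivity. Finally
`(A/sA) = R[y]/(s·y, s) = R[y]/(s) ≅ (R/sR)[y]`.
-/

open Polynomial TensorProduct

section Augmented

variable {R A : Type*} [CommRing R] [CommRing A] [Algebra R A]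
  {M : Type*} [AddCommGroup M] [Module R M]

theorem LinearMap.exact_mulLeft_mkₐ (x : A) :
    Function.Exact (LinearMap.mulLeft R x) (Ideal.Quotient.mkₐ R (Ideal.span {x})).toLinearMap :=
  fun a => by
    simp [Ideal.Quotient.eq_zero_iff_mem, Ideal.mem_span_singleton', mul_comm]

theorem TensorProduct.mk_algebraMap_injective (ε : A →ₐ[R] R) {s : R}
    (hs : ∀ m : M, s • m = 0 → m = 0) :
    Function.Injective (TensorProduct.mk R A M (algebraMap R A s)) := by
  have hretract : ∀ m : M, TensorProduct.lid R M (LinearMap.rTensor M ε.toLinearMap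
      (algebraMap R A s ⊗ₜ m)) = s • m := fun m => by simp
  refine (injective_iff_map_eq_zero _).mpr fun m hm => hs m ?_
  rw [← hretract, ← TensorProduct.mk_apply, hm, map_zero, map_zero]

variable {ε : A →ₐ[R] R} {s : R} (hε : ∀ a : A, a * algebraMap R A s = ε a • algebraMap R A s)
include hε

theorem smul_algebraMap_tmul (a : A) (m : M) :
    a • (algebraMap R A s ⊗ₜ[R] m) = algebraMap R A s ⊗ₜ[R] (ε a • m) := by
  rw [TensorProduct.smul_tmul', smul_eq_mul, hε, TensorProduct.smul_tmul]

theorem mulLeft_algebraMap_eq_toSpanSingleton_comp :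
    LinearMap.mulLeft R (algebraMap R A s) =
      LinearMap.toSpanSingleton R A (algebraMap R A s) ∘ₗ ε.toLinearMap := by
  ext a
  simp [mul_comm, hε]

theorem exact_toSpanSingleton_algebraMap_mkₐ :
    Function.Exact (LinearMap.toSpanSingleton R A (algebraMap R A s))
      (Ideal.Quotient.mkₐ R (Ideal.span {algebraMap R A s})).toLinearMap := by
  have hsurj : Function.Surjective ε.toLinearMap := fun r => ⟨algebraMap R A r, ε.commutes r⟩
  rw [← Function.Surjective.comp_exact_iff_exact hsurj,
    ← mulLeft_algebraMap_eq_toSpanSingleton_comp hε]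
  exact LinearMap.exact_mulLeft_mkₐ _

theorem exact_mk_algebraMap_rTensor_mkₐ :
    Function.Exact (TensorProduct.mk R A M (algebraMap R A s))
      (LinearMap.rTensor M (Ideal.Quotient.mkₐ R (Ideal.span {algebraMap R A s})).toLinearMap) := by
  have hψ : TensorProduct.mk R A M (algebraMap R A s) =
      LinearMap.rTensor M (LinearMap.toSpanSingleton R A (algebraMap R A s)) ∘ₗ
        (TensorProduct.lid R M).symm.toLinearMap := by
    ext m
    simp
  rw [hψ, LinearEquiv.precomp_exact_iff_exact]
  exact rTensor_exact M (exact_toSpanSingleton_algebraMap_mkₐ hε) Ideal.Quotient.mk_surjective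

end Augmented

noncomputable def Ideal.polynomialQuotientAlgEquivQuotientPolynomial {R : Type*} [CommRing R]
    (I : Ideal R) : (R ⧸ I)[X] ≃ₐ[R] R[X] ⧸ I.map C :=
  AlgEquiv.ofRingEquiv (f := I.polynomialQuotientEquivQuotientPolynomial) fun r => by
    rw [Polynomial.algebraMap_apply, Ideal.Quotient.algebraMap_eq, ← Polynomial.map_C,
      Ideal.polynomialQuotientEquivQuotientPolynomial_map_mk]
    rfl

namespace Polynomial

variable {R : Type*} [CommRing R] (s : R)

noncomputable def quotientSpanCMulXAugmentation : R[X] ⧸ Ideal.span {C s * X} →ₐ[R] R :=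
  Ideal.Quotient.liftₐ (Ideal.span {C s * X}) (aeval (0 : R)) (by
    intro a ha
    obtain ⟨c, rfl⟩ := Ideal.mem_span_singleton'.mp ha
    simp)

theorem quotientSpanCMulXAugmentation_mk (p : R[X]) :
    quotientSpanCMulXAugmentation s (Ideal.Quotient.mk _ p) = p.coeff 0 := by
  simp [quotientSpanCMulXAugmentation, coeff_zero_eq_eval_zero]

theorem mul_algebraMap_eq_quotientSpanCMulXAugmentation_smul (a : R[X] ⧸ Ideal.span {C s * X}) :
    a * algebraMap R _ s = quotientSpanCMulXAugmentation s a • algebraMap R _ s := by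
  obtain ⟨p, rfl⟩ := Ideal.Quotient.mk_surjective a
  rw [quotientSpanCMulXAugmentation_mk, Algebra.smul_def, ← map_mul]
  refine Ideal.Quotient.eq.mpr (Ideal.mem_span_singleton'.mpr ⟨p.divX, ?_⟩)
  rw [algebraMap_eq, C_mul]
  linear_combination (C s) * X_mul_divX_add p

noncomputable def quotientSpanAlgebraMapAlgEquiv {I : Ideal R[X]} (hI : I ≤ Ideal.span {C s}) :
    ((R[X] ⧸ I) ⧸ Ideal.span {algebraMap R (R[X] ⧸ I) s}) ≃ₐ[R] (R ⧸ Ideal.span {s})[X] :=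
  have hspan : Ideal.span {algebraMap R (R[X] ⧸ I) s} =
      (Ideal.span {C s}).map (Ideal.Quotient.mkₐ R I) := by
    rw [Ideal.map_span, Set.image_singleton]
    rfl
  have hC : Ideal.span {C s} = (Ideal.span {s}).map C := by
    rw [Ideal.map_span, Set.image_singleton]
  (Ideal.quotientEquivAlgOfEq R hspan).trans <| (DoubleQuot.quotQuotEquivQuotOfLEₐ R hI).trans <|
    (Ideal.quotientEquivAlgOfEq R hC).trans
      (Ideal.polynomialQuotientAlgEquivQuotientPolynomial _).symm

end Polynomial

/--
Let `R` be a commutative ring, `s ∈ R`, and `A = R[y]/(s·y)`.  Let `M` be an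
`R`-module on which multiplication by `s` is injective, and let `i_*M` denote `M` regarded as
an `A`-module via the `R`-algebra map `ε : A → R` sending `y` to `0`.  Then the sequence of
`A`-modules `0 → i_*M → A ⊗_R M → (A/sA) ⊗_R M → 0` is exact, where the first map sends
`m` to `s ⊗ m` (and this map is `A`-linear: `a • (s ⊗ m) = s ⊗ (ε a • m)`), and the second
map is the canonical projection.  Moreover `A/sA ≅ (R/sR)[y]` as `R`-algebras.
-/
theorem stmt_3 (R : Type) [CommRing R] (s : R)
    (M : Type) [AddCommGroup M] [Module R M]
    (hs : ∀ m : M, s • m = 0 → m = 0) :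
    -- `A = R[y]/(s·y)`
    let A : Type := Polynomial R ⧸ Ideal.span {Polynomial.C s * Polynomial.X}
    -- the `R`-algebra map `ε : A → R` sending `y` to `0`
    let ε : A →ₐ[R] R :=
      Ideal.Quotient.liftₐ (Ideal.span {Polynomial.C s * Polynomial.X})
        (Polynomial.aeval (0 : R)) (by
          intro a ha
          obtain ⟨c, rfl⟩ := Ideal.mem_span_singleton'.mp ha
          simp)
    -- the ideal `sA ⊆ A`
    let sA : Ideal A := Ideal.span {algebraMap R A s}
    -- the first map `i_*M → A ⊗_R M`, `m ↦ s ⊗ m`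
    let ψ : M → (A ⊗[R] M) := fun m => (algebraMap R A s) ⊗ₜ[R] m
    -- the second map, the canonical projection `A ⊗_R M → (A/sA) ⊗_R M`
    let Φ : (A ⊗[R] M) →ₗ[R] ((A ⧸ sA) ⊗[R] M) :=
      LinearMap.rTensor M (Ideal.Quotient.mkₐ R sA).toLinearMap
    -- conclusions
    (∀ (a : A) (m : M), a • ψ m = ψ (ε a • m)) ∧   -- `ψ` is `A`-linear for the `i_*` structure
    Function.Injective ψ ∧
    Function.Exact ψ Φ ∧
    Function.Surjective Φ ∧
    Nonempty ((A ⧸ sA) ≃ₐ[R] Polynomial (R ⧸ Ideal.span {s})) := by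
  intro A ε sA ψ Φ
  have hε := mul_algebraMap_eq_quotientSpanCMulXAugmentation_smul s
  have hsX : Ideal.span {C s * X} ≤ Ideal.span {C s} :=
    Ideal.span_singleton_le_span_singleton.mpr (dvd_mul_right _ _)
  exact ⟨smul_algebraMap_tmul hε, TensorProduct.mk_algebraMap_injective ε hs,
    exact_mk_algebraMap_rTensor_mkₐ hε,
    LinearMap.rTensor_surjective M Ideal.Quotient.mk_surjective,
    ⟨quotientSpanAlgebraMapAlgEquiv s hsX⟩⟩
end
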